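/- arXiv:1501.03123 — 3 statements merged into one kernel-verified Lean document; each statement's English description precedes it below -/
import Mathlib

section
/- Let B ≥ 0 be a random variable with esssup B < +∞, and let ũ : (−esssup B, +∞) → ℝ be a non-decreasing, continuous function with finite limit at −esssup B, satisfying: (ii) there exist real numbers γ̄ > 0, x̃ > 0 and C ≥ 0 such that ũ(λx) ≤ λ^γ̄ ũ(x) + λ^γ̄ C for all λ ≥ 1 and all x ≥ x̃; and (iii) ũ is continuously differentiable on its domain and there exist K > 0 and x̂ > 0 such that ũ'(x) ≤ K for all x ≥ x̂. Then the random utility u(x,ω) := ũ(x − B(ω)) satisfies Assumption (GR) with exponent γ̄, threshold x̄ := max{x̃,x̂} + esssup B, and constant c := K·esssup B + C; in particular, for a.e. ω, u(λx,ω) ≤ λ^γ̄ u(x,ω) + λ^γ̄ c for all λ ≥ 1 and x ≥ x̄, and E[u⁺(x̄,·)] < ∞. -/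
open MeasureTheory Filter Set
open scoped ENNReal

/-!
Write `y := x - B ω`, so that `y ≥ max xt xh` whenever `x ≥ x̄` and `B ω ≤ M`. Since
`0 ≤ B ω ≤ M` and `λ ≥ 1`, we have `λx - B ω ≤ λ(y + M)`, so monotonicity and condition (ii)
at `y + M ≥ xt` give `ut(λx - B ω) ≤ λ^γ̄ (ut(y + M) + C)`; the mean value theorem with (iii)
on `[y, y + M]` gives `ut(y + M) ≤ ut y + K M`. Integrability of the positive part follows
from `ut(x̄ - B) ≤ ut x̄` a.s.
-/

theorem image_sub_le_mul_sub_of_hasDerivAt_le {f f' : ℝ → ℝ} {a b K : ℝ} (hab : a ≤ b)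
    (hf : ∀ x ∈ Icc a b, HasDerivAt f (f' x) x) (hle : ∀ x ∈ Ioo a b, f' x ≤ K) :
    f b - f a ≤ K * (b - a) := by
  rcases hab.eq_or_lt with rfl | hab
  · simp
  obtain ⟨c, hc, hslope⟩ := exists_hasDerivAt_eq_slope f f' hab
    (fun x hx => (hf x hx).continuousAt.continuousWithinAt)
    (fun x hx => hf x (Ioo_subset_Icc_self hx))
  exact (div_le_iff₀ (sub_pos.2 hab)).1 (hslope ▸ hle c hc)

theorem add_le_add_mul_of_hasDerivAt_le {f f' : ℝ → ℝ} {a c K : ℝ}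
    (hf : ∀ x ∈ Ioi a, HasDerivAt f (f' x) x) (hle : ∀ x, c ≤ x → f' x ≤ K)
    {y d : ℝ} (hay : a < y) (hcy : c ≤ y) (hd : 0 ≤ d) :
    f (y + d) ≤ f y + K * d := by
  have h := image_sub_le_mul_sub_of_hasDerivAt_le (le_add_of_nonneg_right hd)
    (fun x hx => hf x (hay.trans_le hx.1)) (fun x hx => hle x (hcy.trans hx.1.le))
  linarith

section ReferencePoint

variable {ut ut' : ℝ → ℝ} {M γbar xt C K xh : ℝ}

theorem shifted_utility_growth (hmono : MonotoneOn ut (Ioi (-M)))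
    (hderiv : ∀ x ∈ Ioi (-M), HasDerivAt ut (ut' x) x)
    (hii : ∀ lam : ℝ, 1 ≤ lam → ∀ x : ℝ, xt ≤ x →
      ut (lam * x) ≤ lam ^ γbar * ut x + lam ^ γbar * C)
    (hiii : ∀ x : ℝ, xh ≤ x → ut' x ≤ K) (hxt : 0 < xt)
    {b : ℝ} (hb : 0 ≤ b) (hbM : b ≤ M) {lam x : ℝ} (hlam : 1 ≤ lam)
    (hx : max xt xh + M ≤ x) :
    ut (lam * x - b) ≤ lam ^ γbar * ut (x - b) + lam ^ γbar * (K * M + C) := by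
  set y := x - b
  have hyt : xt ≤ y := by linarith [le_max_left xt xh]
  have hyh : xh ≤ y := by linarith [le_max_right xt xh]
  have hy : -M < y := by linarith
  have hshift : ut (lam * x - b) ≤ ut (lam * (y + M)) :=
    hmono (by rw [mem_Ioi]; nlinarith) (by rw [mem_Ioi]; nlinarith) (by nlinarith)
  have hmvt : ut (y + M) ≤ ut y + K * M :=
    add_le_add_mul_of_hasDerivAt_le hderiv hiii hy hyh (hb.trans hbM)
  have hpow : 0 ≤ lam ^ γbar := Real.rpow_nonneg (zero_le_one.trans hlam) _
  calc ut (lam * x - b) ≤ lam ^ γbar * ut (y + M) + lam ^ γbar * C :=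
        hshift.trans (hii lam hlam _ (by linarith))
    _ ≤ lam ^ γbar * (ut y + K * M) + lam ^ γbar * C := by gcongr
    _ = lam ^ γbar * ut y + lam ^ γbar * (K * M + C) := by ring

theorem lintegral_ofReal_comp_sub_lt_top {Ω : Type*} {mΩ : MeasurableSpace Ω}
    {μ : Measure Ω} [IsFiniteMeasure μ] {B : Ω → ℝ} (hB : ∀ᵐ ω ∂μ, 0 ≤ B ω)
    (hBM : ∀ᵐ ω ∂μ, B ω ≤ M)
    (hmono : MonotoneOn ut (Ioi (-M))) {x : ℝ} (hx : 0 < x) :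
    ∫⁻ ω, ENNReal.ofReal (ut (x - B ω)) ∂μ < ⊤ := by
  have hbound : ∀ᵐ ω ∂μ, ENNReal.ofReal (ut (x - B ω)) ≤ ENNReal.ofReal (ut x) := by
    filter_upwards [hB, hBM] with ω hb hbM
    exact ENNReal.ofReal_le_ofReal <| hmono (by rw [mem_Ioi]; linarith)
      (by rw [mem_Ioi]; linarith) (by linarith)
  calc ∫⁻ ω, ENNReal.ofReal (ut (x - B ω)) ∂μ ≤ ∫⁻ _, ENNReal.ofReal (ut x) ∂μ :=
        lintegral_mono_ae hbound
    _ < ⊤ := by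
      rw [lintegral_const]
      exact ENNReal.mul_lt_top ENNReal.ofReal_lt_top (measure_lt_top μ _)

end ReferencePoint

theorem reference_point_utility_satisfies_GR_general
    {Ω : Type*} {mΩ : MeasurableSpace Ω} (μ : Measure Ω) [IsProbabilityMeasure μ]
    (B : Ω → ℝ) (hB_nonneg : ∀ᵐ ω ∂μ, 0 ≤ B ω)
    -- `M` is the (finite) essential supremum of `B`:
    (M : ℝ) (hM_bound : ∀ᵐ ω ∂μ, B ω ≤ M)
    (ut ut' : ℝ → ℝ)
    (hmono : MonotoneOn ut (Set.Ioi (-M)))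
    -- `ut` is continuously differentiable on its domain:
    (hderiv : ∀ x ∈ Set.Ioi (-M), HasDerivAt ut (ut' x) x)
    -- condition (ii):
    (γbar xt C : ℝ) (hxt : 0 < xt)
    (hii : ∀ lam : ℝ, 1 ≤ lam → ∀ x : ℝ, xt ≤ x →
      ut (lam * x) ≤ lam ^ γbar * ut x + lam ^ γbar * C)
    -- condition (iii):
    (K xh : ℝ)
    (hiii : ∀ x : ℝ, xh ≤ x → ut' x ≤ K) :
    (∀ᵐ ω ∂μ, ∀ lam : ℝ, 1 ≤ lam → ∀ x : ℝ, max xt xh + M ≤ x →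
      ut (lam * x - B ω) ≤ lam ^ γbar * ut (x - B ω) + lam ^ γbar * (K * M + C)) ∧
    (∫⁻ ω, ENNReal.ofReal (ut (max xt xh + M - B ω)) ∂μ) < ⊤ := by
  have hM : 0 ≤ M := by
    obtain ⟨ω, hb, hbM⟩ := (hB_nonneg.and hM_bound).exists
    exact hb.trans hbM
  refine ⟨?_, lintegral_ofReal_comp_sub_lt_top hB_nonneg hM_bound hmono ?_⟩
  · filter_upwards [hB_nonneg, hM_bound] with ω hb hbM lam hlam x hx
    exact shifted_utility_growth hmono hderiv hii hiii hxt hb hbM hlam hx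
  · linarith [hxt.trans_le (le_max_left xt xh)]

/-- **Reference-point utilities satisfy Assumption (GR).**  Let `B ≥ 0` be a random variable with
essential supremum `M < ∞`, and let `ut` be a non-decreasing, continuously differentiable function
on `(-M, ∞)` with a finite limit at `-M`, satisfying the growth condition (ii) and the bounded
derivative condition (iii).  Then the random utility `u(x,ω) := ut (x - B ω)` satisfies Assumption
(GR) with exponent `γbar`, threshold `x̄ := max xt xh + M` and constant `c := K * M + C`;
moreover `E[u⁺(x̄,·)] < ∞`. -/
theorem reference_point_utility_satisfies_GR
    {Ω : Type*} {mΩ : MeasurableSpace Ω} (μ : Measure Ω) [IsProbabilityMeasure μ]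
    (B : Ω → ℝ) (hB_meas : Measurable B) (hB_nonneg : ∀ᵐ ω ∂μ, 0 ≤ B ω)
    -- `M` is the (finite) essential supremum of `B`:
    (M : ℝ) (hM_bound : ∀ᵐ ω ∂μ, B ω ≤ M)
    (hM_least : ∀ M' : ℝ, (∀ᵐ ω ∂μ, B ω ≤ M') → M ≤ M')
    (ut ut' : ℝ → ℝ)
    (hmono : MonotoneOn ut (Set.Ioi (-M)))
    -- finite limit at `-M`:
    (hlim : ∃ l : ℝ, Tendsto ut (nhdsWithin (-M) (Set.Ioi (-M))) (nhds l))
    -- `ut` is continuously differentiable on its domain: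
    (hderiv : ∀ x ∈ Set.Ioi (-M), HasDerivAt ut (ut' x) x)
    (hcont' : ContinuousOn ut' (Set.Ioi (-M)))
    -- condition (ii):
    (γbar xt C : ℝ) (hγbar : 0 < γbar) (hxt : 0 < xt) (hC : 0 ≤ C)
    (hii : ∀ lam : ℝ, 1 ≤ lam → ∀ x : ℝ, xt ≤ x →
      ut (lam * x) ≤ lam ^ γbar * ut x + lam ^ γbar * C)
    -- condition (iii):
    (K xh : ℝ) (hK : 0 < K) (hxh : 0 < xh)
    (hiii : ∀ x : ℝ, xh ≤ x → ut' x ≤ K) :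
    (∀ᵐ ω ∂μ, ∀ lam : ℝ, 1 ≤ lam → ∀ x : ℝ, max xt xh + M ≤ x →
      ut (lam * x - B ω) ≤ lam ^ γbar * ut (x - B ω) + lam ^ γbar * (K * M + C)) ∧
    (∫⁻ ω, ENNReal.ofReal (ut (max xt xh + M - B ω)) ∂μ) < ⊤ :=
  reference_point_utility_satisfies_GR_general (mΩ := mΩ) μ B hB_nonneg M hM_bound ut ut' hmono
    hderiv γbar xt C hxt hii K xh hiii
end

section
/- Assume Assumption (QNA). Then for every x₀ ≥ 0, the 𝓖-measurable random variable K := x₀/β satisfies K ≥ x₀ a.s. and, for every x ∈ [0,x₀] and every ξ ∈ Ξ̃^d(x), the inequality ‖ξ‖ ≤ K holds a.s. -/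
open MeasureTheory Filter Set
open scoped ENNReal

noncomputable section

/-- The topological support of a measure on `ℝ^d`. -/
def measSupport {d : ℕ} (m : Measure (EuclideanSpace ℝ (Fin d))) :
    Set (EuclideanSpace ℝ (Fin d)) :=
  {x | ∀ U : Set (EuclideanSpace ℝ (Fin d)), IsOpen U → x ∈ U → 0 < m U}

/-- **Lemma 4.8 (boundedness of admissible strategies).**  Under Assumption (QNA), for every
`x₀ ≥ 0` the `𝓖`-measurable random variable `K := x₀ / β` satisfies `K ≥ x₀` a.s. and, for every
`x ∈ [0, x₀]` and every `ξ ∈ Ξ̃ᵈ(x)`, one has `‖ξ‖ ≤ K` a.s.  Here `ν` is a regular conditional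
distribution of `Y` given the sub-σ-algebra `mG`, and `D(ω)` is the affine hull of its support. -/
theorem norm_bound_of_admissible_one_step
    {Ω : Type*} (mG : MeasurableSpace Ω) {mF : MeasurableSpace Ω} (μ : Measure Ω) [IsProbabilityMeasure μ]
    (d : ℕ) (hGF : mG ≤ mF)
    (hnull : ∀ s : Set Ω, MeasurableSet s → μ s = 0 → MeasurableSet[mG] s)
    (Y : Ω → EuclideanSpace ℝ (Fin d)) (hY : Measurable Y)
    -- `ν` is a regular conditional distribution of `Y` given `mG`:
    (ν : Ω → Measure (EuclideanSpace ℝ (Fin d)))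
    (hν_prob : ∀ ω, IsProbabilityMeasure (ν ω))
    (hν_meas : ∀ A : Set (EuclideanSpace ℝ (Fin d)), MeasurableSet A →
      Measurable[mG] (fun ω => ν ω A))
    (hν_cond : ∀ A : Set (EuclideanSpace ℝ (Fin d)), MeasurableSet A →
      ∀ s : Set Ω, MeasurableSet[mG] s → ∫⁻ ω in s, ν ω A ∂μ = μ (s ∩ Y ⁻¹' A))
    -- Assumption (QNA):
    (β κ : Ω → ℝ) (hβ_meas : Measurable[mG] β) (hκ_meas : Measurable[mG] κ)
    (hβ : ∀ᵐ ω ∂μ, 0 < β ω ∧ β ω ≤ 1) (hκ : ∀ᵐ ω ∂μ, 0 < κ ω)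
    (hQNA : ∀ ξ : Ω → EuclideanSpace ℝ (Fin d), Measurable[mG] ξ →
      (∀ᵐ ω ∂μ, ξ ω ∈ affineSpan ℝ (measSupport (ν ω))) →
      ∀ᵐ ω ∂μ, κ ω ≤
        (μ[Set.indicator {ω' | (inner ℝ (ξ ω') (Y ω') : ℝ) ≤ -(β ω') * ‖ξ ω'‖}
            (fun _ => (1:ℝ)) | mG]) ω)
    (x₀ : ℝ) (hx₀ : 0 ≤ x₀) :
    Measurable[mG] (fun ω => x₀ / β ω) ∧
    (∀ᵐ ω ∂μ, x₀ ≤ x₀ / β ω) ∧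
    (∀ x : ℝ, 0 ≤ x → x ≤ x₀ →
      ∀ ξ : Ω → EuclideanSpace ℝ (Fin d), Measurable[mG] ξ →
        (∀ᵐ ω ∂μ, ξ ω ∈ affineSpan ℝ (measSupport (ν ω))) →
        (∀ᵐ ω ∂μ, 0 ≤ x + (inner ℝ (ξ ω) (Y ω) : ℝ)) →
        ∀ᵐ ω ∂μ, ‖ξ ω‖ ≤ x₀ / β ω) := by
  refine ⟨measurable_const.div hβ_meas, ?_, ?_⟩
  · filter_upwards [hβ] with ω ⟨hb0, hb1⟩
    rw [le_div_iff₀ hb0]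
    nlinarith
  · intro x hx hxx₀ ξ hξ hξspan hadm
    set B : Set Ω := {ω' | (inner ℝ (ξ ω') (Y ω') : ℝ) ≤ -(β ω') * ‖ξ ω'‖} with hBdef
    have hBG : MeasurableSet[mF] B :=
      measurableSet_le ((hξ.mono hGF le_rfl).inner hY)
        ((hβ_meas.mono hGF le_rfl).neg.mul (measurable_norm.comp (hξ.mono hGF le_rfl)))
    set C : Set Ω := {ω | x < β ω * ‖ξ ω‖} with hCdef
    have hCG : MeasurableSet[mG] C :=
      measurableSet_lt measurable_const (hβ_meas.mul (measurable_norm.comp hξ))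
    letI : MeasurableSpace Ω := mF
    have hB : MeasurableSet[mF] B := hBG
    set g : Ω → ℝ := μ[B.indicator (fun _ => (1:ℝ)) | mG] with hgdef
    have hg := hQNA ξ hξ hξspan
    have hC : MeasurableSet[mF] C := hGF _ hCG
    -- μ (C ∩ B) = 0
    have hCB : μ (C ∩ B) = 0 := by
      have hsub : C ∩ B ⊆ {ω | ¬ (0 ≤ x + (inner ℝ (ξ ω) (Y ω) : ℝ))} := by
        rintro ω ⟨hωC, hωB⟩
        have h1 : x < β ω * ‖ξ ω‖ := hωC
        have h2 : (inner ℝ (ξ ω) (Y ω) : ℝ) ≤ -(β ω) * ‖ξ ω‖ := hωB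
        intro h
        nlinarith
      exact measure_mono_null hsub (by simpa [ae_iff] using hadm)
    -- the set integral of the indicator over C vanishes
    have hind : Integrable (B.indicator (fun _ => (1:ℝ))) μ :=
      (integrable_const (1:ℝ)).indicator hB
    have hint0 : ∫ ω in C, g ω ∂μ = 0 := by
      rw [hgdef, setIntegral_condExp hGF hind hCG,
        setIntegral_indicator hB, setIntegral_const]
      simp [measureReal_def, hCB]
    -- g is a.e. positive
    have hgpos : ∀ᵐ ω ∂μ, 0 < g ω := by
      filter_upwards [hg, hκ] with ω h1 h2 using lt_of_lt_of_le h2 h1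
    -- hence μ C = 0
    have hμC : μ C = 0 := by
      have hnn : 0 ≤ᵐ[μ.restrict C] g :=
        ae_restrict_of_ae (hgpos.mono fun ω h => le_of_lt h)
      have hgi : Integrable g (μ.restrict C) := integrable_condExp.restrict
      have h0 : g =ᵐ[μ.restrict C] 0 := by
        rw [← integral_eq_zero_iff_of_nonneg_ae hnn hgi]
        exact hint0
      have hfalse : ∀ᵐ ω ∂μ.restrict C, False := by
        filter_upwards [h0, ae_restrict_of_ae hgpos] with ω h1 h2
        rw [h1] at h2; exact lt_irrefl 0 h2
      have hr : μ.restrict C = 0 := by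
        rwa [eventually_false_iff_eq_bot, ae_eq_bot] at hfalse
      exact Measure.restrict_eq_zero.mp hr
    -- conclude
    have hnotC : ∀ᵐ ω ∂μ, β ω * ‖ξ ω‖ ≤ x := by
      have hae : ∀ᵐ ω ∂μ, ω ∉ C := by
        rw [ae_iff]; simpa using hμC
      filter_upwards [hae] with ω h
      simpa [hCdef, not_lt] using h
    filter_upwards [hnotC, hβ] with ω h1 ⟨hb0, _⟩
    calc ‖ξ ω‖ ≤ x / β ω := by rw [le_div_iff₀ hb0]; nlinarith
    _ ≤ x₀ / β ω := by gcongr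
end
end

section
/- There exists a non-decreasing, continuous function f : [0,∞) → ℝ with f(0) = −1/2, f(1) = 0, f(x) ≤ 1/2 for all x ≥ 0, and lim_{x→+∞} f(x) = 1/2, whose generalized asymptotic elasticity at +∞ is infinite: for every γ > 0 and every x̄ ≥ 0 there exist λ ≥ 1 and x ≥ x̄ such that f(λx) > λ^γ f(x). Nevertheless, f satisfies the growth condition (GR): with x̄ = 1 and c = 1/2, for any γ̄ > 0 one has f(λx) ≤ λ^γ̄ f(x) + λ^γ̄ c for all λ ≥ 1 and x ≥ 1. -/
/-!
The utility is `(x - 1)/2` on `[0, 1]`, followed by jumps of height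
`2⁻ⁿ/4` smoothed over the tiny intervals `[2ⁿ, 2ⁿ + 2⁻ⁿ]`. Across such an interval the
value rises from `(1 - 2⁻ⁿ)/2` to `(1 - 2⁻ⁿ⁻¹)/2`, a relative gain of order `2⁻ⁿ`, while the
scaling factor `λ = 1 + 4⁻ⁿ` needed to cross it costs only `λ^γ - 1 ≈ γ 4⁻ⁿ`; for `n`
large the gain wins, whatever `γ`. Boundedness alone gives (GR).
-/

open Filter

namespace InfiniteElasticity

lemma rpow_one_add_mul_one_sub_lt_one {s γ : ℝ} (hs : 0 < s) (hγ : 0 < γ) (hγs : γ * s < 1) :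
    (1 + s) ^ γ * (1 - γ * s) < 1 := by
  have hexp : (1 + s) ^ γ ≤ Real.exp (s * γ) := by
    rw [Real.exp_mul]
    exact Real.rpow_le_rpow (by linarith) (by linarith [Real.add_one_le_exp s]) hγ.le
  have hlt : Real.exp (γ * s) < 1 / (1 - γ * s) :=
    Real.exp_bound_div_one_sub_of_interval' (by positivity) hγs
  rw [mul_comm s γ] at hexp
  rw [lt_div_iff₀ (by linarith)] at hlt
  calc (1 + s) ^ γ * (1 - γ * s) ≤ Real.exp (γ * s) * (1 - γ * s) := by gcongr
    _ < 1 := hlt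

lemma growth_condition_of_nonneg_of_le {f : ℝ → ℝ} {xbar c γ lam x : ℝ}
    (hnonneg : ∀ y, xbar ≤ y → 0 ≤ f y) (hle : ∀ y, f y ≤ c) (hγ : 0 ≤ γ) (hlam : 1 ≤ lam)
    (hx : xbar ≤ x) : f (lam * x) ≤ lam ^ γ * f x + lam ^ γ * c := by
  have hpow : 1 ≤ lam ^ γ := Real.one_le_rpow hlam hγ
  have hc : 0 ≤ c := (hnonneg x hx).trans (hle x)
  nlinarith [hnonneg x hx, hle (lam * x)]

noncomputable section

/-- Rises linearly from `0` at `2ⁿ` to `1` at `2ⁿ + 2⁻ⁿ`. -/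
def ramp (n : ℕ) (x : ℝ) : ℝ := min 1 (max 0 (2 ^ n * (x - 2 ^ n)))

def weight (n : ℕ) : ℝ := (1 / 2) ^ n / 4

def utility (x : ℝ) : ℝ := (min x 1 - 1) / 2 + ∑' n, weight n * ramp n x

end

lemma ramp_nonneg (n : ℕ) (x : ℝ) : 0 ≤ ramp n x := le_min zero_le_one (le_max_left _ _)

lemma ramp_le_one (n : ℕ) (x : ℝ) : ramp n x ≤ 1 := min_le_left _ _

lemma ramp_monotone (n : ℕ) : Monotone (ramp n) := fun a b hab => by
  unfold ramp; gcongr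

lemma ramp_continuous (n : ℕ) : Continuous (ramp n) := by
  unfold ramp; fun_prop

lemma ramp_eq_zero {n : ℕ} {x : ℝ} (hx : x ≤ 2 ^ n) : ramp n x = 0 := by
  have : 2 ^ n * (x - 2 ^ n) ≤ 0 := mul_nonpos_of_nonneg_of_nonpos (by positivity) (by linarith)
  rw [ramp, max_eq_left this, min_eq_right zero_le_one]

lemma ramp_eq_one {n : ℕ} {x : ℝ} (hx : 2 ^ n + (1 / 2) ^ n ≤ x) : ramp n x = 1 := by
  have h : (1 : ℝ) ≤ 2 ^ n * (x - 2 ^ n) :=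
    calc (1 : ℝ) = 2 ^ n * (1 / 2) ^ n := by rw [← mul_pow]; norm_num
      _ ≤ 2 ^ n * (x - 2 ^ n) := by gcongr; linarith
  rw [ramp, min_eq_left (le_max_of_le_right h)]

lemma two_pow_add_half_pow_le (n : ℕ) : (2 : ℝ) ^ n + (1 / 2) ^ n ≤ 2 ^ (n + 1) := by
  have : (1 / 2 : ℝ) ^ n ≤ 2 ^ n := pow_le_pow_left₀ (by norm_num) (by norm_num) n
  rw [pow_succ]; linarith

lemma weight_nonneg (n : ℕ) : 0 ≤ weight n := by unfold weight; positivity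

lemma summable_weight : Summable weight :=
  (summable_geometric_of_lt_one (by norm_num) (by norm_num)).div_const 4

lemma tsum_weight : ∑' n, weight n = 1 / 2 := by
  simp only [weight]
  rw [tsum_div_const, tsum_geometric_two]; norm_num

lemma sum_range_weight (m : ℕ) : ∑ k ∈ Finset.range m, weight k = (1 - (1 / 2) ^ m) / 2 := by
  simp only [weight]
  rw [← Finset.sum_div, geom_sum_eq (by norm_num)]; ring

lemma weight_mul_ramp_le (n : ℕ) (x : ℝ) : weight n * ramp n x ≤ weight n :=
  mul_le_of_le_one_right (weight_nonneg n) (ramp_le_one n x)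

lemma norm_weight_mul_ramp_le (n : ℕ) (x : ℝ) : ‖weight n * ramp n x‖ ≤ weight n := by
  rw [Real.norm_of_nonneg (mul_nonneg (weight_nonneg n) (ramp_nonneg n x))]
  exact weight_mul_ramp_le n x

lemma summable_weight_mul_ramp (x : ℝ) : Summable fun n => weight n * ramp n x :=
  .of_norm_bounded summable_weight (norm_weight_mul_ramp_le · x)

lemma utility_monotone : Monotone utility := fun a b hab => by
  unfold utility
  refine add_le_add (by gcongr) ?_
  exact Summable.tsum_le_tsum
    (fun n => mul_le_mul_of_nonneg_left (ramp_monotone n hab) (weight_nonneg n))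
    (summable_weight_mul_ramp a) (summable_weight_mul_ramp b)

lemma utility_continuous : Continuous utility := by
  unfold utility
  refine .add (by fun_prop) (continuous_tsum (fun n => ?_) summable_weight norm_weight_mul_ramp_le)
  exact continuous_const.mul (ramp_continuous n)

lemma utility_le_half (x : ℝ) : utility x ≤ 1 / 2 := by
  have hramps : ∑' n, weight n * ramp n x ≤ 1 / 2 :=
    tsum_weight ▸ Summable.tsum_le_tsum (weight_mul_ramp_le · x) (summable_weight_mul_ramp x)
      summable_weight
  rw [utility]
  linarith [min_le_right x 1]

lemma utility_zero : utility 0 = -(1 / 2) := by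
  simp only [utility, ramp_eq_zero (pow_nonneg zero_le_two _), mul_zero, tsum_zero]
  norm_num

/-- `utility` is flat between the end of the `(m-1)`-th ramp and the start of the `m`-th. -/
lemma utility_eq_of_ramps {m : ℕ} {x : ℝ} (hdone : ∀ k < m, 2 ^ k + (1 / 2) ^ k ≤ x)
    (hx : x ≤ 2 ^ m) (hx1 : 1 ≤ x) : utility x = (1 - (1 / 2) ^ m) / 2 := by
  have hzero : ∀ k ∉ Finset.range m, weight k * ramp k x = 0 := fun k hk => by
    have hkm : x ≤ 2 ^ k :=
      hx.trans (pow_le_pow_right₀ one_le_two (not_lt.mp (Finset.mem_range.not.mp hk)))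
    rw [ramp_eq_zero hkm, mul_zero]
  have hone : ∀ k ∈ Finset.range m, weight k * ramp k x = weight k := fun k hk => by
    rw [ramp_eq_one (hdone k (Finset.mem_range.mp hk)), mul_one]
  rw [utility, tsum_eq_sum hzero, Finset.sum_congr rfl hone, sum_range_weight, min_eq_right hx1]
  ring

lemma two_pow_add_half_pow_le_two_pow {k n : ℕ} (hkn : k < n) :
    (2 : ℝ) ^ k + (1 / 2) ^ k ≤ 2 ^ n :=
  (two_pow_add_half_pow_le k).trans (pow_le_pow_right₀ one_le_two hkn)

lemma utility_two_pow (n : ℕ) : utility (2 ^ n) = (1 - (1 / 2) ^ n) / 2 :=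
  utility_eq_of_ramps (fun _ => two_pow_add_half_pow_le_two_pow) le_rfl (one_le_pow₀ one_le_two)

lemma utility_two_pow_add_half_pow (n : ℕ) :
    utility (2 ^ n + (1 / 2) ^ n) = (1 - (1 / 2) ^ (n + 1)) / 2 := by
  have hn : (1 : ℝ) ≤ 2 ^ n := one_le_pow₀ one_le_two
  refine utility_eq_of_ramps (fun k hk => ?_) (two_pow_add_half_pow_le n)
    (hn.trans (le_add_of_nonneg_right (by positivity)))
  rcases (Nat.lt_succ_iff_lt_or_eq.mp hk) with hkn | rfl
  · exact (two_pow_add_half_pow_le_two_pow hkn).trans (le_add_of_nonneg_right (by positivity))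
  · exact le_rfl

lemma utility_one : utility 1 = 0 := by
  simpa using utility_two_pow 0

lemma utility_nonneg_of_one_le {x : ℝ} (hx : 1 ≤ x) : 0 ≤ utility x :=
  utility_one ▸ utility_monotone hx

lemma tendsto_utility : Tendsto utility atTop (nhds (1 / 2)) := by
  refine tendsto_atTop_isLUB utility_monotone ⟨?_, fun b hb => ?_⟩
  · rintro _ ⟨x, rfl⟩
    exact utility_le_half x
  · have hlim : Tendsto (fun n : ℕ => utility (2 ^ n)) atTop (nhds (1 / 2)) := by
      simp only [utility_two_pow]
      simpa using ((tendsto_pow_atTop_nhds_zero_of_lt_one (r := (1 / 2 : ℝ)) (by norm_num)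
        (by norm_num)).const_sub 1).div_const 2
    exact le_of_tendsto' hlim fun n => hb ⟨_, rfl⟩

/-- The scaling `λ = 1 + 4⁻ⁿ` carries `2ⁿ` across the `n`-th ramp. -/
lemma exists_rpow_mul_utility_lt {γ : ℝ} (hγ : 0 < γ) (xbar : ℝ) :
    ∃ lam, 1 ≤ lam ∧ ∃ x, xbar ≤ x ∧ lam ^ γ * utility x < utility (lam * x) := by
  obtain ⟨n, hn⟩ := pow_unbounded_of_one_lt (max xbar (2 * γ)) one_lt_two
  set a : ℝ := (1 / 2) ^ n with ha
  have ha0 : 0 < a := by positivity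
  have ha1 : a ≤ 1 := pow_le_one₀ (by norm_num) (by norm_num)
  have hscale : a * 2 ^ n = 1 := by rw [ha, ← mul_pow]; norm_num
  have hγa : 2 * γ * a < 1 := by
    have := (le_max_right xbar (2 * γ)).trans_lt hn
    nlinarith
  refine ⟨1 + a ^ 2, by nlinarith, 2 ^ n, (le_max_left _ _).trans hn.le, ?_⟩
  have hpoint : (1 + a ^ 2) * 2 ^ n = 2 ^ n + (1 / 2) ^ n := by linear_combination a * hscale
  have hhalf : (1 / 2 : ℝ) ^ (n + 1) = a / 2 := by rw [pow_succ, ha]; ring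
  rw [hpoint, utility_two_pow, utility_two_pow_add_half_pow, hhalf, ← ha]
  have hP : 0 < (1 + a ^ 2) ^ γ := by positivity
  have hγa2 : γ * a ^ 2 ≤ a / 2 := by nlinarith
  have hbound := rpow_one_add_mul_one_sub_lt_one (pow_pos ha0 2) hγ (by linarith)
  have hfactor : 1 - a ≤ (1 - γ * a ^ 2) * (1 - a / 2) := by
    nlinarith [mul_nonneg (mul_nonneg hγ.le (sq_nonneg a)) ha0.le]
  have h1 := mul_le_mul_of_nonneg_left hfactor hP.le
  have h2 := mul_lt_mul_of_pos_right hbound (show 0 < 1 - a / 2 by linarith)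
  nlinarith

end InfiniteElasticity

/-- **Example (bounded utility with infinite asymptotic elasticity).**  There exists a
non-decreasing continuous function `f : [0,∞) → ℝ` with `f 0 = -1/2`, `f 1 = 0`, `f ≤ 1/2`,
`f(x) → 1/2` as `x → ∞`, whose generalized asymptotic elasticity at `+∞` is infinite
(for every `γ > 0` and `x̄ ≥ 0` there are `λ ≥ 1`, `x ≥ x̄` with `f(λx) > λ^γ f(x)`),
but which nevertheless satisfies the growth condition (GR) with `x̄ = 1` and `c = 1/2`
for every exponent `γ̄ > 0`. -/
theorem exists_bounded_utility_with_infinite_elasticity :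
    ∃ f : ℝ → ℝ,
      MonotoneOn f (Set.Ici 0) ∧ ContinuousOn f (Set.Ici 0) ∧
      f 0 = -(1/2) ∧ f 1 = 0 ∧ (∀ x : ℝ, 0 ≤ x → f x ≤ 1/2) ∧
      Tendsto f atTop (nhds (1/2)) ∧
      -- infinite generalized asymptotic elasticity:
      (∀ γ : ℝ, 0 < γ → ∀ xbar : ℝ, 0 ≤ xbar →
        ∃ lam : ℝ, 1 ≤ lam ∧ ∃ x : ℝ, xbar ≤ x ∧ lam ^ γ * f x < f (lam * x)) ∧
      -- the growth condition (GR) with `x̄ = 1`, `c = 1/2`: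
      (∀ γbar : ℝ, 0 < γbar → ∀ lam : ℝ, 1 ≤ lam → ∀ x : ℝ, 1 ≤ x →
        f (lam * x) ≤ lam ^ γbar * f x + lam ^ γbar * (1/2)) :=
  open InfiniteElasticity in
  ⟨utility, utility_monotone.monotoneOn _, utility_continuous.continuousOn, utility_zero,
    utility_one, fun x _ => utility_le_half x, tendsto_utility,
    fun _ hγ xbar _ => exists_rpow_mul_utility_lt hγ xbar,
    fun _ hγ _ hlam _ hx => growth_condition_of_nonneg_of_le (fun _ => utility_nonneg_of_one_le)
      utility_le_half hγ.le hlam hx⟩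
end
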